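/- The presented group on three generators x₁, x₂, x₃ with defining relations (x₃x₂x₁)² = (x₂x₁x₃)² and (x₂x₁x₃)² = (x₁x₃x₂)² is big, i.e. it contains a subgroup which is free of rank 2. -/
import Mathlib


namespace Stmt14

/-- A group `G` is big if it contains a free subgroup of rank 2, i.e. there is an
injective group homomorphism from the free group on two generators into `G`. -/
def Big (G : Type*) [Group G] : Prop :=
  ∃ f : FreeGroup (Fin 2) →* G, Function.Injective f

/-- Generators `x₁, x₂, x₃` of the free group, indexed by `0, 1, 2`. -/
def x (i : Fin 3) : FreeGroup (Fin 3) := FreeGroup.of i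

/-- The relators of the presentation `⟨x₁, x₂, x₃ | (x₃x₂x₁)² = (x₂x₁x₃)² = (x₁x₃x₂)²⟩`. -/
def rels : Set (FreeGroup (Fin 3)) :=
  { (x 2 * x 1 * x 0) ^ 2 * ((x 1 * x 0 * x 2) ^ 2)⁻¹,
    (x 1 * x 0 * x 2) ^ 2 * ((x 0 * x 2 * x 1) ^ 2)⁻¹ }

/-- Images of the generators in `F₂` killing all relators. -/
def f : Fin 3 → FreeGroup (Fin 2) :=
  ![FreeGroup.of 0, FreeGroup.of 1, (FreeGroup.of 1 * FreeGroup.of 0)⁻¹]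

lemma rels_killed : ∀ r ∈ rels, FreeGroup.lift f r = 1 := by
  intro r hr
  rcases hr with h | h <;> subst h <;>
    simp only [x, map_mul, map_pow, map_inv, FreeGroup.lift_apply_of, f] <;>
    simp [Matrix.cons_val_zero, Matrix.cons_val_one] <;> group

/-- The induced hom `PresentedGroup rels →* F₂`. -/
def φ : PresentedGroup rels →* FreeGroup (Fin 2) :=
  PresentedGroup.toGroup rels_killed

/-- A section `F₂ →* PresentedGroup rels`. -/
def g : FreeGroup (Fin 2) →* PresentedGroup rels :=
  FreeGroup.lift (fun i => PresentedGroup.of i.castSucc)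

lemma comp_eq : φ.comp g = MonoidHom.id _ := by
  apply FreeGroup.ext_hom
  intro i
  fin_cases i <;>
    simp [g, φ, FreeGroup.lift_apply_of, PresentedGroup.toGroup.of, f]

theorem presentedGroup_big : Big (PresentedGroup rels) := by
  refine ⟨g, ?_⟩
  have : Function.LeftInverse φ g := fun y => by
    have := congrArg (fun h : FreeGroup (Fin 2) →* FreeGroup (Fin 2) => h y) comp_eq
    simpa using this
  exact this.injective

end Stmt14
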